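/- arXiv:2308.06789 — 9 statements merged into one kernel-verified Lean document; each statement's English description precedes it below -/
import Mathlib

section
/- If x is found at c and c is found at a, then x is found at a. Here 'x is found at r' (written x ⧏ r) means: either x is bland and x ⊆ r, or there exist a wand w and some b ∈ r such that tapping b with w yields x. -/
/-- `x` is a subset of `r` (with respect to the membership relation `mem`). -/
def wsSub {M : Type*} (mem : M → M → Prop) (x r : M) : Prop :=
  ∀ y, mem y x → mem y r

/-- `x` is found at `r`:  either `x` is bland and `x ⊆ r`, or some wand-tap of a member
of `r` yields `x`. -/
def wsFoundAt {M : Type*} (Bland : M → Prop) (mem : M → M → Prop)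
    (Tap : M → M → M → Prop) (x r : M) : Prop :=
  (Bland x ∧ wsSub mem x r) ∨ ∃ w b, mem b r ∧ Tap w b x

/-- `x ⧏∈ a`: there is `r ∈ a` with `x` found at `r`. -/
def wsFoundIn {M : Type*} (Bland : M → Prop) (mem : M → M → Prop)
    (Tap : M → M → M → Prop) (x a : M) : Prop :=
  ∃ r, wsFoundAt Bland mem Tap x r ∧ mem r a

/-- `p` is (a) `cpot a`: a bland set whose members are exactly those `x` with `x ⧏∈ a`. -/
def wsIsCpot {M : Type*} (Bland : M → Prop) (mem : M → M → Prop)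
    (Tap : M → M → M → Prop) (a p : M) : Prop :=
  Bland p ∧ ∀ x, mem x p ↔ wsFoundIn Bland mem Tap x a

/-- `i` is the (bland) intersection of `a` and `h`. -/
def wsIsInter {M : Type*} (Bland : M → Prop) (mem : M → M → Prop) (a h i : M) : Prop :=
  Bland i ∧ ∀ x, mem x i ↔ (mem x a ∧ mem x h)

/-- `h` is a wistory: bland, and every `a ∈ h` equals `cpot (a ∩ h)`. -/
def wsWistory {M : Type*} (Bland : M → Prop) (mem : M → M → Prop)
    (Tap : M → M → M → Prop) (h : M) : Prop :=
  Bland h ∧ ∀ a, mem a h → ∃ i, wsIsInter Bland mem a h i ∧ wsIsCpot Bland mem Tap i a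

/-- `s` is a wevel: `s = cpot h` for some wistory `h`. -/
def wsWevel {M : Type*} (Bland : M → Prop) (mem : M → M → Prop)
    (Tap : M → M → M → Prop) (s : M) : Prop :=
  ∃ h, wsWistory Bland mem Tap h ∧ wsIsCpot Bland mem Tap h s

/-- `p` is wand-potent: closed under `⧏∈`. -/
def wsWandPotent {M : Type*} (Bland : M → Prop) (mem : M → M → Prop)
    (Tap : M → M → M → Prop) (p : M) : Prop :=
  ∀ x, wsFoundIn Bland mem Tap x p → mem x p

/-- `a` is wand-transitive: every member of `a` is found at `a`. -/
def wsWandTransitive {M : Type*} (Bland : M → Prop) (mem : M → M → Prop)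
    (Tap : M → M → M → Prop) (a : M) : Prop :=
  ∀ x, mem x a → wsFoundAt Bland mem Tap x a

/-- `s` is `wev a`: the `∈`-least wevel at which `a` is found. -/
def wsIsWevOf {M : Type*} (Bland : M → Prop) (mem : M → M → Prop)
    (Tap : M → M → M → Prop) (a s : M) : Prop :=
  wsWevel Bland mem Tap s ∧ wsFoundAt Bland mem Tap a s ∧
    ∀ r, wsWevel Bland mem Tap r → wsFoundAt Bland mem Tap a r → ¬ mem r s

/-! A tapped object is not bland, so it has no members and is trivially a subset of anything;
hence whatever is found at `a` is a subset of `a`. Being found at `r` is monotone in `r`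
with respect to `⊆`, which gives transitivity. -/

section FoundAt

variable {M : Type*} {Bland : M → Prop} {mem : M → M → Prop} {Tap : M → M → M → Prop}

theorem wsSub_trans {x c a : M} (hxc : wsSub mem x c) (hca : wsSub mem c a) :
    wsSub mem x a :=
  fun y hy => hca y (hxc y hy)

theorem wsFoundAt_mono {x c a : M} (hca : wsSub mem c a)
    (hx : wsFoundAt Bland mem Tap x c) : wsFoundAt Bland mem Tap x a := by
  rcases hx with ⟨hBx, hxc⟩ | ⟨w, b, hbc, htap⟩
  · exact Or.inl ⟨hBx, wsSub_trans hxc hca⟩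
  · exact Or.inr ⟨w, b, hca b hbc, htap⟩

theorem wsSub_of_not_bland (hInNB : ∀ x a, mem x a → Bland a) {c : M} (hc : ¬ Bland c)
    (r : M) : wsSub mem c r :=
  fun y hy => absurd (hInNB y c hy) hc

theorem wsSub_of_wsFoundAt (hInNB : ∀ x a, mem x a → Bland a)
    (hTapNB : ∀ w b c, Tap w b c → ¬ Bland c) {c a : M}
    (hc : wsFoundAt Bland mem Tap c a) : wsSub mem c a := by
  rcases hc with ⟨-, hca⟩ | ⟨w, b, -, htap⟩
  · exact hca
  · exact wsSub_of_not_bland hInNB (hTapNB w b c htap) a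

end FoundAt

/-- If x is found at c and c is found at a, then x is found at a. -/
theorem foundAt_trans {M : Type*} (Bland Wand : M → Prop) (mem : M → M → Prop)
    (Tap : M → M → M → Prop)
    (hInNB : ∀ x a, mem x a → Bland a)
    (hTapNB : ∀ w a c, Tap w a c → Wand w ∧ ¬ Bland c)
    (x c a : M)
    (h1 : wsFoundAt Bland mem Tap x c)
    (h2 : wsFoundAt Bland mem Tap c a) :
    wsFoundAt Bland mem Tap x a :=
  wsFoundAt_mono (wsSub_of_wsFoundAt hInNB (fun w b c h => (hTapNB w b c h).2) h2) h1
end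

section
/- If some object satisfies φ and every object satisfying φ is wand-potent, then there is an ∈-minimal object satisfying φ (an object a with φ(a) such that no b with φ(b) satisfies b ∈ a). -/
/- Russell's argument: if no φ-object is `∈`-minimal, the set
`e = {x ∈ a : x ∉ x ∧ x belongs to every φ-object}` (for some φ-object `a`) is bland and contained
in a φ-member of every φ-object `b`, so `e ⧏∈ b` and, by wand-potency, `e ∈ b`.
Thus `e` lies in every φ-object, in particular in `a`, and `e ∈ e ↔ e ∉ e`. -/

section CoreWev

variable {M : Type*} {Bland : M → Prop} {mem : M → M → Prop} {Tap : M → M → M → Prop}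

theorem wsFoundIn_of_sub_of_mem {x r a : M} (hx : Bland x) (hxr : wsSub mem x r)
    (hra : mem r a) : wsFoundIn Bland mem Tap x a :=
  ⟨r, Or.inl ⟨hx, hxr⟩, hra⟩

theorem wsWandPotent.mem_of_sub_of_mem {x r a : M} (ha : wsWandPotent Bland mem Tap a)
    (hx : Bland x) (hxr : wsSub mem x r) (hra : mem r a) : mem x a :=
  ha x (wsFoundIn_of_sub_of_mem hx hxr hra)

theorem mem_of_forall_sub {φ : M → Prop} (hpot : ∀ a, φ a → wsWandPotent Bland mem Tap a)
    (hmem : ∀ a, φ a → ∃ b, φ b ∧ mem b a) {e : M} (he : Bland e)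
    (hsub : ∀ b, φ b → wsSub mem e b) {a : M} (ha : φ a) : mem e a := by
  obtain ⟨b, hb, hba⟩ := hmem a ha
  exact (hpot a ha).mem_of_sub_of_mem he (hsub b hb) hba

theorem not_mem_and_of_russell {P : M → Prop} {a e : M}
    (he : ∀ x, mem x e ↔ mem x a ∧ ¬ mem x x ∧ P x) : ¬ (mem e a ∧ P e) := by
  rintro ⟨hea, hPe⟩
  have hnee : ¬ mem e e := fun hee => ((he e).1 hee).2.1 hee
  exact hnee ((he e).2 ⟨hea, hnee, hPe⟩)

end CoreWev

theorem exists_min_of_wandPotent_general {M : Type*} (Bland : M → Prop) (mem : M → M → Prop)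
    (Tap : M → M → M → Prop)
    (hInNB : ∀ x a, mem x a → Bland a)
    (hSep : ∀ (φ : M → Prop) a, Bland a → ∃ b, Bland b ∧ ∀ x, mem x b ↔ (mem x a ∧ φ x))
    (φ : M → Prop)
    (hne : ∃ a, φ a)
    (hpot : ∀ a, φ a → wsWandPotent Bland mem Tap a) :
    ∃ a, φ a ∧ ∀ b, φ b → ¬ mem b a := by
  by_contra! hmin
  obtain ⟨a, ha⟩ := hne
  obtain ⟨b, -, hba⟩ := hmin a ha
  obtain ⟨e, he, hemem⟩ :=
    hSep (fun x => ¬ mem x x ∧ ∀ c, φ c → mem x c) a (hInNB b a hba)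
  have hsub : ∀ c, φ c → wsSub mem e c := fun c hc y hy => ((hemem y).1 hy).2.2 c hc
  have hall : ∀ c, φ c → mem e c := fun c => mem_of_forall_sub hpot hmin he hsub
  exact not_mem_and_of_russell hemem ⟨hall a ha, hall⟩

/-- If something is φ and every φ is wand-potent, then some φ is ∈-minimal. -/
theorem exists_min_of_wandPotent {M : Type*} (Bland Wand : M → Prop) (mem : M → M → Prop)
    (Tap : M → M → M → Prop)
    (hInNB : ∀ x a, mem x a → Bland a)
    (hTapNB : ∀ w a c, Tap w a c → Wand w ∧ ¬ Bland c)
    (hExt : ∀ a b, Bland a → Bland b → (∀ x, mem x a ↔ mem x b) → a = b)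
    (hSep : ∀ (φ : M → Prop) a, Bland a → ∃ b, Bland b ∧ ∀ x, mem x b ↔ (mem x a ∧ φ x))
    (φ : M → Prop)
    (hne : ∃ a, φ a)
    (hpot : ∀ a, φ a → wsWandPotent Bland mem Tap a) :
    ∃ a, φ a ∧ ∀ b, φ b → ¬ mem b a :=
  exists_min_of_wandPotent_general Bland mem Tap hInNB hSep φ hne hpot
end

section
/- Every member of a wistory is a wevel. -/
/-!
Inside a wistory `h`, membership is well founded: if `y ∈ z` with `y, z ∈ h`, then by
separation every subset of `y` is a bland set found at `y`, hence a member of `z = cpot (z ∩ h)`,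
so Cantor's theorem gives `#y < #z`. Induction along it shows that every member of `h` contains
its members from `h`. Consequently, for `a ∈ h` the set `a ∩ h` is again a wistory, and
`a = cpot (a ∩ h)` is a wevel.
-/

section Wistory

variable {M : Type*} {Bland : M → Prop} {mem : M → M → Prop} {Tap : M → M → M → Prop}

theorem wsFoundAt.mono {x r c : M} (hrc : wsSub mem r c)
    (hx : wsFoundAt Bland mem Tap x r) : wsFoundAt Bland mem Tap x c := by
  rcases hx with ⟨hxB, hxr⟩ | ⟨w, b, hbr, htap⟩
  · exact Or.inl ⟨hxB, fun y hy => hrc y (hxr y hy)⟩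
  · exact Or.inr ⟨w, b, hrc b hbr, htap⟩

theorem cardinal_mk_lt_of_forall_bland_subset_mem
    (hSep : ∀ (φ : M → Prop) a, Bland a → ∃ b, Bland b ∧ ∀ x, mem x b ↔ (mem x a ∧ φ x))
    {y z : M} (hy : Bland y) (hz : ∀ b, Bland b → wsSub mem b y → mem b z) :
    Cardinal.mk {w // mem w y} < Cardinal.mk {w // mem w z} := by
  choose F hFB hF using fun S : Set {w // mem w y} =>
    hSep (fun x => ∃ hx : mem x y, ⟨x, hx⟩ ∈ S) y hy
  have hFz (S : Set {w // mem w y}) : mem (F S) z :=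
    hz (F S) (hFB S) fun x hx => ((hF S x).1 hx).1
  have hF_inj : Function.Injective fun S => (⟨F S, hFz S⟩ : {w // mem w z}) := by
    intro S T hST
    ext ⟨w, hw⟩
    have hmem (U : Set {w // mem w y}) : ⟨w, hw⟩ ∈ U ↔ mem w (F U) := by
      rw [hF U w]
      exact ⟨fun hU => ⟨hw, hw, hU⟩, fun ⟨_, _, hU⟩ => hU⟩
    rw [hmem S, hmem T, show F S = F T from congrArg Subtype.val hST]
  calc Cardinal.mk {w // mem w y}
      < Cardinal.mk (Set {w // mem w y}) := by rw [Cardinal.mk_set]; exact Cardinal.cantor _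
    _ ≤ Cardinal.mk {w // mem w z} := Cardinal.mk_le_of_injective hF_inj

namespace wsWistory

variable {h : M}

theorem bland_of_mem (hh : wsWistory Bland mem Tap h) {c : M} (hc : mem c h) : Bland c := by
  obtain ⟨_, _, hcpot⟩ := hh.2 c hc
  exact hcpot.1

theorem mem_iff (hh : wsWistory Bland mem Tap h) {c : M} (hc : mem c h) (x : M) :
    mem x c ↔ ∃ r, wsFoundAt Bland mem Tap x r ∧ mem r c ∧ mem r h := by
  obtain ⟨i, hi, hcpot⟩ := hh.2 c hc
  simp only [hcpot.2 x, wsFoundIn, hi.2]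

theorem mk_lt_of_mem (hh : wsWistory Bland mem Tap h)
    (hSep : ∀ (φ : M → Prop) a, Bland a → ∃ b, Bland b ∧ ∀ x, mem x b ↔ (mem x a ∧ φ x))
    {y z : M} (hz : mem z h) (hyz : mem y z) (hy : mem y h) :
    Cardinal.mk {w // mem w y} < Cardinal.mk {w // mem w z} :=
  cardinal_mk_lt_of_forall_bland_subset_mem hSep (hh.bland_of_mem hy) fun b hb hby =>
    (hh.mem_iff hz b).2 ⟨y, Or.inl ⟨hb, hby⟩, hyz, hy⟩

theorem wellFounded_mem (hh : wsWistory Bland mem Tap h)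
    (hSep : ∀ (φ : M → Prop) a, Bland a → ∃ b, Bland b ∧ ∀ x, mem x b ↔ (mem x a ∧ φ x)) :
    WellFounded fun y z => mem y z ∧ mem y h ∧ mem z h :=
  Subrelation.wf (fun ⟨hyz, hy, hz⟩ => hh.mk_lt_of_mem hSep hz hyz hy)
    (InvImage.wf (fun c => Cardinal.mk {w // mem w c}) Cardinal.lt_wf)

theorem wsSub_of_mem (hh : wsWistory Bland mem Tap h)
    (hSep : ∀ (φ : M → Prop) a, Bland a → ∃ b, Bland b ∧ ∀ x, mem x b ↔ (mem x a ∧ φ x))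
    {c r : M} (hc : mem c h) (hrc : mem r c) (hr : mem r h) : wsSub mem r c := by
  induction c using (hh.wellFounded_mem hSep).induction generalizing r with
  | _ c ih =>
    intro y hy
    obtain ⟨τ, hyτ, hτr, hτ⟩ := (hh.mem_iff hr y).1 hy
    have hτ_sub : wsSub mem τ r := ih r ⟨hrc, hr, hc⟩ hr hτr hτ
    exact (hh.mem_iff hc y).2 ⟨r, hyτ.mono hτ_sub, hrc, hr⟩

theorem of_closed (hh : wsWistory Bland mem Tap h)
    (hSep : ∀ (φ : M → Prop) a, Bland a → ∃ b, Bland b ∧ ∀ x, mem x b ↔ (mem x a ∧ φ x))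
    {g : M} (hg : Bland g) (hgh : wsSub mem g h)
    (hclosed : ∀ b r, mem b g → mem r b → mem r h → mem r g) :
    wsWistory Bland mem Tap g := by
  refine ⟨hg, fun b hb => ?_⟩
  have hbh : mem b h := hgh b hb
  obtain ⟨i, hiB, hi⟩ := hSep (fun x => mem x g) b (hh.bland_of_mem hbh)
  refine ⟨i, ⟨hiB, hi⟩, hh.bland_of_mem hbh, fun x => ?_⟩
  have hinter (r : M) : mem r i ↔ mem r b ∧ mem r h :=
    (hi r).trans
      ⟨fun ⟨hrb, hrg⟩ => ⟨hrb, hgh r hrg⟩, fun ⟨hrb, hrh⟩ => ⟨hrb, hclosed b r hb hrb hrh⟩⟩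
  simp only [hh.mem_iff hbh x, wsFoundIn, hinter]

end wsWistory

end Wistory

theorem mem_wistory_wevel_general {M : Type*} (Bland : M → Prop) (mem : M → M → Prop)
    (Tap : M → M → M → Prop)
    (hSep : ∀ (φ : M → Prop) a, Bland a → ∃ b, Bland b ∧ ∀ x, mem x b ↔ (mem x a ∧ φ x)) :
    ∀ h, wsWistory Bland mem Tap h → ∀ a, mem a h → wsWevel Bland mem Tap a := by
  intro h hh a ha
  obtain ⟨i, hi, hcpot⟩ := hh.2 a ha
  have hi_sub_h : wsSub mem i h := fun b hb => ((hi.2 b).1 hb).2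
  have hi_closed : ∀ b r, mem b i → mem r b → mem r h → mem r i := fun b r hb hrb hrh =>
    have ⟨hba, hbh⟩ := (hi.2 b).1 hb
    (hi.2 r).2 ⟨hh.wsSub_of_mem hSep ha hba hbh r hrb, hrh⟩
  exact ⟨i, hh.of_closed hSep hi.1 hi_sub_h hi_closed, hcpot⟩

/-- Every member of a wistory is a wevel. -/
theorem mem_wistory_wevel {M : Type*} (Bland Wand : M → Prop) (mem : M → M → Prop)
    (Tap : M → M → M → Prop)
    (hInNB : ∀ x a, mem x a → Bland a)
    (hTapNB : ∀ w a c, Tap w a c → Wand w ∧ ¬ Bland c)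
    (hExt : ∀ a b, Bland a → Bland b → (∀ x, mem x a ↔ mem x b) → a = b)
    (hSep : ∀ (φ : M → Prop) a, Bland a → ∃ b, Bland b ∧ ∀ x, mem x b ↔ (mem x a ∧ φ x)) :
    ∀ h, wsWistory Bland mem Tap h → ∀ a, mem a h → wsWevel Bland mem Tap a :=
  mem_wistory_wevel_general Bland mem Tap hSep
end

section
/- For all objects a, b and wevels r, s: (1) a ∉ wev(a); (2) r ⊆ s iff s ∉ r; (3) s = wev(s); (4) if b ⊆ a and both are bland then wev(b) ⊆ wev(a); (5) if b ∈ a then wev(b) ∈ wev(a); (6) a ∉ a. -/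
/-!
Wevels are bland and wand-transitive, and every cpot is wand-potent, so `⧏` composes and a wevel
that is a member of a wevel is a subset of it. The key fact is that every member of a wevel `s`
is found at some wevel in `s`. By `∈`-induction on wevels, the wevels in `s` form a wistory `g`;
then `b := cpot g` is a wevel with `b ⊆ s`, and of the three cases of trichotomy `b ∈ s` and
`s ∈ b` both put a wevel inside itself, so `b = s`, which is the claim. The six facts follow from
this and the minimality of `wev`.
-/

section

variable {M : Type*} {Bland : M → Prop} {mem : M → M → Prop} {Tap : M → M → M → Prop}

local notation:50 x:51 " ⧏ " r:51 => wsFoundAt Bland mem Tap x r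

local notation "Wevel" => wsWevel Bland mem Tap

theorem wsFoundAt.sub_of_bland (hTapNB : ∀ w a c, Tap w a c → ¬ Bland c) {x r : M}
    (hx : Bland x) (h : x ⧏ r) : wsSub mem x r := by
  rcases h with ⟨-, hsub⟩ | ⟨w, b, -, htap⟩
  · exact hsub
  · exact absurd hx (hTapNB w b x htap)

theorem wsFoundAt.trans (hInNB : ∀ x a, mem x a → Bland a)
    (hTapNB : ∀ w a c, Tap w a c → ¬ Bland c) {x r t : M} (hxr : x ⧏ r) (hrt : r ⧏ t) :
    x ⧏ t := by
  rcases hrt with ⟨-, hrt⟩ | ⟨w, b, -, htap⟩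
  · rcases hxr with ⟨hx, hxr⟩ | ⟨w, b, hb, htap⟩
    · exact Or.inl ⟨hx, fun y hy => hrt y (hxr y hy)⟩
    · exact Or.inr ⟨w, b, hrt b hb, htap⟩
  · -- `r` is the result of a tap, so it is not bland and has no members
    have hr := hTapNB w b r htap
    rcases hxr with ⟨hx, hxr⟩ | ⟨-, b', hb', -⟩
    · exact Or.inl ⟨hx, fun y hy => absurd (hInNB y r (hxr y hy)) hr⟩
    · exact absurd (hInNB b' r hb') hr

theorem wsIsCpot.wandPotent (hInNB : ∀ x a, mem x a → Bland a)
    (hTapNB : ∀ w a c, Tap w a c → ¬ Bland c) {a p : M} (hp : wsIsCpot Bland mem Tap a p) :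
    wsWandPotent Bland mem Tap p := by
  rintro x ⟨r, hxr, hrp⟩
  obtain ⟨t, hrt, hta⟩ := (hp.2 r).1 hrp
  exact (hp.2 x).2 ⟨t, hxr.trans hInNB hTapNB hrt, hta⟩

theorem exists_isCpot_sub (hSep : ∀ (φ : M → Prop) a, Bland a → ∃ b, Bland b ∧
      ∀ x, mem x b ↔ (mem x a ∧ φ x))
    {g s : M} (hs : Bland s) (hpot : wsWandPotent Bland mem Tap s) (hgs : wsSub mem g s) :
    ∃ p, wsIsCpot Bland mem Tap g p ∧ wsSub mem p s := by
  obtain ⟨p, hp, hmem⟩ := hSep (fun y => wsFoundIn Bland mem Tap y g) s hs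
  refine ⟨p, ⟨hp, fun y => ?_⟩, fun y hy => ((hmem y).1 hy).1⟩
  rw [hmem]
  exact ⟨And.right, fun ⟨r, hyr, hrg⟩ => ⟨hpot y ⟨r, hyr, hgs r hrg⟩, r, hyr, hrg⟩⟩

namespace wsWevel

theorem bland {s : M} (hs : Wevel s) : Bland s := by
  obtain ⟨-, -, hs, -⟩ := hs
  exact hs

theorem wandPotent (hInNB : ∀ x a, mem x a → Bland a)
    (hTapNB : ∀ w a c, Tap w a c → ¬ Bland c) {s : M} (hs : Wevel s) :
    wsWandPotent Bland mem Tap s := by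
  obtain ⟨_, -, hcpot⟩ := hs
  exact wsIsCpot.wandPotent hInNB hTapNB hcpot

theorem wandTransitive (hInNB : ∀ x a, mem x a → Bland a)
    (hTapNB : ∀ w a c, Tap w a c → ¬ Bland c) {s : M} (hs : Wevel s) :
    wsWandTransitive Bland mem Tap s := by
  obtain ⟨h, ⟨-, hwist⟩, -, hcpot⟩ := hs
  intro x hx
  obtain ⟨r, hxr, hrh⟩ := (hcpot x).1 hx
  obtain ⟨i, ⟨-, hmemi⟩, hr, hcpotr⟩ := hwist r hrh
  have hrs : wsSub mem r s := fun y hy => by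
    obtain ⟨v, hyv, hvi⟩ := (hcpotr y).1 hy
    exact (hcpot y).2 ⟨v, hyv, ((hmemi v).1 hvi).2⟩
  exact hxr.trans hInNB hTapNB (Or.inl ⟨hr, hrs⟩)

theorem sub_of_mem (hInNB : ∀ x a, mem x a → Bland a)
    (hTapNB : ∀ w a c, Tap w a c → ¬ Bland c) {r s : M} (hs : Wevel s)
    (hr : Bland r) (hrs : mem r s) : wsSub mem r s :=
  (hs.wandTransitive hInNB hTapNB r hrs).sub_of_bland hTapNB hr

theorem induction (hmin : ∀ φ : M → Prop, (∃ s, Wevel s ∧ φ s) →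
      ∃ s, Wevel s ∧ φ s ∧ ∀ r, Wevel r → mem r s → ¬ φ r)
    {P : M → Prop} (step : ∀ s, Wevel s → (∀ t, Wevel t → mem t s → P t) → P s)
    {s : M} (hs : Wevel s) : P s := by
  by_contra hPs
  obtain ⟨m, hm, hPm, hlt⟩ := hmin (fun t => ¬ P t) ⟨s, hs, hPs⟩
  exact hPm (step m hm fun t ht hts => not_not.mp (hlt t ht hts))

theorem not_mem_self (hmin : ∀ φ : M → Prop, (∃ s, Wevel s ∧ φ s) →
      ∃ s, Wevel s ∧ φ s ∧ ∀ r, Wevel r → mem r s → ¬ φ r)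
    {s : M} (hs : Wevel s) : ¬ mem s s :=
  hs.induction (P := fun s => ¬ mem s s) hmin fun s hs ih hss => ih s hs hss hss

end wsWevel

theorem wsWistory_of_forall_wevel (hInNB : ∀ x a, mem x a → Bland a)
    (hTapNB : ∀ w a c, Tap w a c → ¬ Bland c)
    (hSep : ∀ (φ : M → Prop) a, Bland a → ∃ b, Bland b ∧ ∀ x, mem x b ↔ (mem x a ∧ φ x))
    {g : M} (hg : Bland g) (hgW : ∀ t, mem t g → Wevel t)
    (hclosed : ∀ t, mem t g → ∀ y, mem y t → ∃ t', mem t' t ∧ mem t' g ∧ y ⧏ t') :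
    wsWistory Bland mem Tap g := by
  refine ⟨hg, fun t htg => ?_⟩
  have ht := hgW t htg
  obtain ⟨i, hi, hmemi⟩ := hSep (fun z => mem z g) t ht.bland
  refine ⟨i, ⟨hi, hmemi⟩, ht.bland, fun y => ⟨fun hyt => ?_, fun ⟨r, hyr, hri⟩ => ?_⟩⟩
  · obtain ⟨t', ht't, ht'g, hyt'⟩ := hclosed t htg y hyt
    exact ⟨t', hyt', (hmemi t').2 ⟨ht't, ht'g⟩⟩
  · exact ht.wandPotent hInNB hTapNB y ⟨r, hyr, ((hmemi r).1 hri).1⟩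

theorem wsWevel.exists_wevel_mem_foundAt_of_forall_mem (hInNB : ∀ x a, mem x a → Bland a)
    (hTapNB : ∀ w a c, Tap w a c → ¬ Bland c)
    (hSep : ∀ (φ : M → Prop) a, Bland a → ∃ b, Bland b ∧ ∀ x, mem x b ↔ (mem x a ∧ φ x))
    (htri : ∀ r s, Wevel r → Wevel s → mem r s ∨ r = s ∨ mem s r)
    (hmin : ∀ φ : M → Prop, (∃ s, Wevel s ∧ φ s) →
      ∃ s, Wevel s ∧ φ s ∧ ∀ r, Wevel r → mem r s → ¬ φ r)
    {s : M} (hs : Wevel s)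
    (ih : ∀ t, Wevel t → mem t s → ∀ y, mem y t → ∃ t', Wevel t' ∧ mem t' t ∧ y ⧏ t')
    {x : M} (hx : mem x s) : ∃ t, Wevel t ∧ mem t s ∧ x ⧏ t := by
  obtain ⟨g, hg, hmemg⟩ := hSep (wsWevel Bland mem Tap) s hs.bland
  have hgW : wsWistory Bland mem Tap g := by
    refine wsWistory_of_forall_wevel hInNB hTapNB hSep hg (fun t ht => ((hmemg t).1 ht).2) ?_
    intro t htg y hyt
    obtain ⟨hts, ht⟩ := (hmemg t).1 htg
    obtain ⟨t', ht', ht't, hyt'⟩ := ih t ht hts y hyt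
    exact ⟨t', ht't, (hmemg t').2 ⟨hs.sub_of_mem hInNB hTapNB ht.bland hts t' ht't, ht'⟩, hyt'⟩
  obtain ⟨b, hb, hbs⟩ :=
    exists_isCpot_sub hSep hs.bland (hs.wandPotent hInNB hTapNB) fun t ht => ((hmemg t).1 ht).1
  have hbW : Wevel b := ⟨g, hgW, hb⟩
  rcases htri b s hbW hs with hbs' | rfl | hsb
  · -- `b` would be a member of `g` found at itself, hence `b ∈ cpot g = b`
    have hbb : mem b b :=
      (hb.2 b).2 ⟨b, Or.inl ⟨hbW.bland, fun y hy => hy⟩, (hmemg b).2 ⟨hbs', hbW⟩⟩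
    exact absurd hbb (hbW.not_mem_self hmin)
  · obtain ⟨t, hxt, htg⟩ := (hb.2 x).1 hx
    exact ⟨t, ((hmemg t).1 htg).2, ((hmemg t).1 htg).1, hxt⟩
  · exact absurd (hbs s hsb) (hs.not_mem_self hmin)

theorem wsWevel.exists_wevel_mem_foundAt (hInNB : ∀ x a, mem x a → Bland a)
    (hTapNB : ∀ w a c, Tap w a c → ¬ Bland c)
    (hSep : ∀ (φ : M → Prop) a, Bland a → ∃ b, Bland b ∧ ∀ x, mem x b ↔ (mem x a ∧ φ x))
    (htri : ∀ r s, Wevel r → Wevel s → mem r s ∨ r = s ∨ mem s r)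
    (hmin : ∀ φ : M → Prop, (∃ s, Wevel s ∧ φ s) →
      ∃ s, Wevel s ∧ φ s ∧ ∀ r, Wevel r → mem r s → ¬ φ r)
    {s : M} (hs : Wevel s) {x : M} (hx : mem x s) : ∃ t, Wevel t ∧ mem t s ∧ x ⧏ t :=
  hs.induction (P := fun s => ∀ x, mem x s → ∃ t, Wevel t ∧ mem t s ∧ x ⧏ t)
    hmin (fun _ hs ih _ hx =>
      hs.exists_wevel_mem_foundAt_of_forall_mem hInNB hTapNB hSep htri hmin ih hx) x hx

theorem wsWevel.sub_iff_not_mem (hInNB : ∀ x a, mem x a → Bland a)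
    (hTapNB : ∀ w a c, Tap w a c → ¬ Bland c)
    (htri : ∀ r s, Wevel r → Wevel s → mem r s ∨ r = s ∨ mem s r)
    (hmin : ∀ φ : M → Prop, (∃ s, Wevel s ∧ φ s) →
      ∃ s, Wevel s ∧ φ s ∧ ∀ r, Wevel r → mem r s → ¬ φ r)
    {r s : M} (hr : Wevel r) (hs : Wevel s) : wsSub mem r s ↔ ¬ mem s r := by
  refine ⟨fun hrs hsr => hs.not_mem_self hmin (hrs s hsr), fun hsr => ?_⟩
  rcases htri r s hr hs with hrs | rfl | hsr'
  · exact hs.sub_of_mem hInNB hTapNB hr.bland hrs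
  · exact fun y hy => hy
  · exact absurd hsr' hsr

theorem wsWevel.isWevOf_self (hTapNB : ∀ w a c, Tap w a c → ¬ Bland c)
    (hmin : ∀ φ : M → Prop, (∃ s, Wevel s ∧ φ s) →
      ∃ s, Wevel s ∧ φ s ∧ ∀ r, Wevel r → mem r s → ¬ φ r)
    {s : M} (hs : Wevel s) : wsIsWevOf Bland mem Tap s s :=
  ⟨hs, Or.inl ⟨hs.bland, fun _ hy => hy⟩, fun r hr hsr hrs =>
    hr.not_mem_self hmin (hsr.sub_of_bland hTapNB hs.bland r hrs)⟩

theorem exists_wsIsWevOf (hStrat : ∀ a, ∃ s, Wevel s ∧ a ⧏ s)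
    (hmin : ∀ φ : M → Prop, (∃ s, Wevel s ∧ φ s) →
      ∃ s, Wevel s ∧ φ s ∧ ∀ r, Wevel r → mem r s → ¬ φ r)
    (a : M) : ∃ s, wsIsWevOf Bland mem Tap a s := by
  obtain ⟨s, hs, has, hlt⟩ := hmin (a ⧏ ·) (hStrat a)
  exact ⟨s, hs, has, fun r hr har hrs => hlt r hr hrs har⟩

namespace wsIsWevOf

theorem not_mem (hInNB : ∀ x a, mem x a → Bland a)
    (hTapNB : ∀ w a c, Tap w a c → ¬ Bland c)
    (hSep : ∀ (φ : M → Prop) a, Bland a → ∃ b, Bland b ∧ ∀ x, mem x b ↔ (mem x a ∧ φ x))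
    (htri : ∀ r s, Wevel r → Wevel s → mem r s ∨ r = s ∨ mem s r)
    (hmin : ∀ φ : M → Prop, (∃ s, Wevel s ∧ φ s) →
      ∃ s, Wevel s ∧ φ s ∧ ∀ r, Wevel r → mem r s → ¬ φ r)
    {a s : M} (h : wsIsWevOf Bland mem Tap a s) : ¬ mem a s := fun has => by
  obtain ⟨t, ht, hts, hat⟩ := h.1.exists_wevel_mem_foundAt hInNB hTapNB hSep htri hmin has
  exact h.2.2 t ht hat hts

theorem sub_of_sub (hInNB : ∀ x a, mem x a → Bland a)
    (hTapNB : ∀ w a c, Tap w a c → ¬ Bland c)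
    (htri : ∀ r s, Wevel r → Wevel s → mem r s ∨ r = s ∨ mem s r)
    (hmin : ∀ φ : M → Prop, (∃ s, Wevel s ∧ φ s) →
      ∃ s, Wevel s ∧ φ s ∧ ∀ r, Wevel r → mem r s → ¬ φ r)
    {a b sa sb : M} (ha : Bland a) (hb : Bland b) (hba : wsSub mem b a)
    (hsa : wsIsWevOf Bland mem Tap a sa) (hsb : wsIsWevOf Bland mem Tap b sb) :
    wsSub mem sb sa := by
  have hasa := hsa.2.1.sub_of_bland hTapNB ha
  have hbsa : b ⧏ sa := Or.inl ⟨hb, fun y hy => hasa y (hba y hy)⟩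
  exact (hsb.1.sub_iff_not_mem hInNB hTapNB htri hmin hsa.1).2 (hsb.2.2 sa hsa.1 hbsa)

theorem mem_of_mem (hInNB : ∀ x a, mem x a → Bland a)
    (hTapNB : ∀ w a c, Tap w a c → ¬ Bland c)
    (hSep : ∀ (φ : M → Prop) a, Bland a → ∃ b, Bland b ∧ ∀ x, mem x b ↔ (mem x a ∧ φ x))
    (htri : ∀ r s, Wevel r → Wevel s → mem r s ∨ r = s ∨ mem s r)
    (hmin : ∀ φ : M → Prop, (∃ s, Wevel s ∧ φ s) →
      ∃ s, Wevel s ∧ φ s ∧ ∀ r, Wevel r → mem r s → ¬ φ r)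
    {a b sa sb : M} (hba : mem b a)
    (hsa : wsIsWevOf Bland mem Tap a sa) (hsb : wsIsWevOf Bland mem Tap b sb) : mem sb sa := by
  have hbsa := hsa.2.1.sub_of_bland hTapNB (hInNB b a hba) b hba
  obtain ⟨t, ht, htsa, hbt⟩ := hsa.1.exists_wevel_mem_foundAt hInNB hTapNB hSep htri hmin hbsa
  rcases htri sb t hsb.1 ht with hsbt | rfl | htsb
  · exact hsa.1.sub_of_mem hInNB hTapNB ht.bland htsa sb hsbt
  · exact htsa
  · exact absurd htsb (hsb.2.2 t ht hbt)

end wsIsWevOf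

end

theorem wevOf_facts_general {M : Type*} (Bland Wand : M → Prop) (mem : M → M → Prop)
    (Tap : M → M → M → Prop)
    (hInNB : ∀ x a, mem x a → Bland a)
    (hTapNB : ∀ w a c, Tap w a c → Wand w ∧ ¬ Bland c)
    (hSep : ∀ (φ : M → Prop) a, Bland a → ∃ b, Bland b ∧ ∀ x, mem x b ↔ (mem x a ∧ φ x))
    (hStrat : ∀ a, ∃ s, wsWevel Bland mem Tap s ∧ wsFoundAt Bland mem Tap a s)
    -- the wevels are well-ordered by ∈ (proved separately, may be assumed):
    (htri : ∀ r s, wsWevel Bland mem Tap r → wsWevel Bland mem Tap s →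
      (mem r s ∨ r = s ∨ mem s r))
    (hmin : ∀ φ : M → Prop, (∃ s, wsWevel Bland mem Tap s ∧ φ s) →
      ∃ s, wsWevel Bland mem Tap s ∧ φ s ∧
        ∀ r, wsWevel Bland mem Tap r → mem r s → ¬ φ r) :
    (∀ a s, wsIsWevOf Bland mem Tap a s → ¬ mem a s) ∧
    (∀ r s, wsWevel Bland mem Tap r → wsWevel Bland mem Tap s →
      (wsSub mem r s ↔ ¬ mem s r)) ∧
    (∀ s, wsWevel Bland mem Tap s → wsIsWevOf Bland mem Tap s s) ∧
    (∀ a b sa sb, Bland a → Bland b → wsSub mem b a →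
      wsIsWevOf Bland mem Tap a sa → wsIsWevOf Bland mem Tap b sb → wsSub mem sb sa) ∧
    (∀ a b sa sb, mem b a →
      wsIsWevOf Bland mem Tap a sa → wsIsWevOf Bland mem Tap b sb → mem sb sa) ∧
    (∀ a, ¬ mem a a) := by
  have hTap : ∀ w a c, Tap w a c → ¬ Bland c := fun w a c h => (hTapNB w a c h).2
  refine ⟨fun a s h => h.not_mem hInNB hTap hSep htri hmin,
    fun r s hr hs => hr.sub_iff_not_mem hInNB hTap htri hmin hs,
    fun s hs => hs.isWevOf_self hTap hmin,
    fun a b sa sb ha hb hba hsa hsb => hsa.sub_of_sub hInNB hTap htri hmin ha hb hba hsb,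
    fun a b sa sb hba hsa hsb => hsa.mem_of_mem hInNB hTap hSep htri hmin hba hsb,
    fun a haa => ?_⟩
  obtain ⟨s, hs⟩ := exists_wsIsWevOf hStrat hmin a
  exact hs.not_mem hInNB hTap hSep htri hmin (hs.2.1.sub_of_bland hTap (hInNB a a haa) a haa)

/-- Basic facts about wev(a), the least wevel at which a is found:
(1) a ∉ wev(a); (2) for wevels r,s: r ⊆ s iff s ∉ r; (3) s = wev(s);
(4) if b ⊆ a, both bland, then wev(b) ⊆ wev(a); (5) if b ∈ a then wev(b) ∈ wev(a);
(6) a ∉ a. -/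
theorem wevOf_facts {M : Type*} (Bland Wand : M → Prop) (mem : M → M → Prop)
    (Tap : M → M → M → Prop)
    (hInNB : ∀ x a, mem x a → Bland a)
    (hTapNB : ∀ w a c, Tap w a c → Wand w ∧ ¬ Bland c)
    (hExt : ∀ a b, Bland a → Bland b → (∀ x, mem x a ↔ mem x b) → a = b)
    (hSep : ∀ (φ : M → Prop) a, Bland a → ∃ b, Bland b ∧ ∀ x, mem x b ↔ (mem x a ∧ φ x))
    (hStrat : ∀ a, ∃ s, wsWevel Bland mem Tap s ∧ wsFoundAt Bland mem Tap a s)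
    -- the wevels are well-ordered by ∈ (proved separately, may be assumed):
    (htri : ∀ r s, wsWevel Bland mem Tap r → wsWevel Bland mem Tap s →
      (mem r s ∨ r = s ∨ mem s r))
    (hmin : ∀ φ : M → Prop, (∃ s, wsWevel Bland mem Tap s ∧ φ s) →
      ∃ s, wsWevel Bland mem Tap s ∧ φ s ∧
        ∀ r, wsWevel Bland mem Tap r → mem r s → ¬ φ r) :
    (∀ a s, wsIsWevOf Bland mem Tap a s → ¬ mem a s) ∧
    (∀ r s, wsWevel Bland mem Tap r → wsWevel Bland mem Tap s →
      (wsSub mem r s ↔ ¬ mem s r)) ∧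
    (∀ s, wsWevel Bland mem Tap s → wsIsWevOf Bland mem Tap s s) ∧
    (∀ a b sa sb, Bland a → Bland b → wsSub mem b a →
      wsIsWevOf Bland mem Tap a sa → wsIsWevOf Bland mem Tap b sb → wsSub mem sb sa) ∧
    (∀ a b sa sb, mem b a →
      wsIsWevOf Bland mem Tap a sa → wsIsWevOf Bland mem Tap b sb → mem sb sa) ∧
    (∀ a, ¬ mem a a) :=
  wevOf_facts_general Bland Wand mem Tap hInNB hTapNB hSep hStrat htri hmin
end

section
/- An object a is hereditarily bland if and only if a is bland and every member of a is hereditarily bland. -/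
/-- a is hereditarily bland: bland, with a transitive superset of bland sets. -/
def wsHeredBland {M : Type*} (Bland : M → Prop) (mem : M → M → Prop) (a : M) : Prop :=
  Bland a ∧ ∃ c, wsSub mem a c ∧ ∀ x, mem x c → wsSub mem x c ∧ Bland x

/-!
Hereditary blandness passes to members, since a witness `c` for `a` also witnesses each
member of `a`. Conversely, by stratification a bland `a` lies inside some wevel `s`, and a
wevel contains the members of its bland members, because each of its wistory's levels is
`cpot` of the earlier ones. Separating the hereditarily bland elements out of `s` then gives
a witness for `a`.
-/

section

variable {M : Type*} {Bland : M → Prop} {mem : M → M → Prop} {Tap : M → M → M → Prop}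

theorem wsHeredBland.of_mem {a y : M} (ha : wsHeredBland Bland mem a) (hy : mem y a) :
    wsHeredBland Bland mem y :=
  let ⟨_, c, hac, hc⟩ := ha
  ⟨(hc y (hac y hy)).2, c, (hc y (hac y hy)).1, hc⟩

theorem wsSub_of_foundAt_of_bland (hTapNB : ∀ w a c, Tap w a c → ¬ Bland c) {x r : M}
    (hx : wsFoundAt Bland mem Tap x r) (hBx : Bland x) : wsSub mem x r := by
  rcases hx with ⟨_, hxr⟩ | ⟨w, b, _, hTap⟩
  · exact hxr
  · exact absurd hBx (hTapNB w b x hTap)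

theorem wsWistory.foundIn_of_mem_of_mem {h r y : M} (hh : wsWistory Bland mem Tap h)
    (hr : mem r h) (hy : mem y r) : wsFoundIn Bland mem Tap y h := by
  obtain ⟨i, ⟨_, hi⟩, _, hrCpot⟩ := hh.2 r hr
  obtain ⟨r', hyr', hr'i⟩ := (hrCpot y).1 hy
  exact ⟨r', hyr', ((hi r').1 hr'i).2⟩

theorem wsWevel.mem_of_mem_of_bland (hTapNB : ∀ w a c, Tap w a c → ¬ Bland c) {s x y : M}
    (hs : wsWevel Bland mem Tap s) (hx : mem x s) (hBx : Bland x) (hy : mem y x) : mem y s := by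
  obtain ⟨h, hh, _, hsCpot⟩ := hs
  obtain ⟨r, hxr, hrh⟩ := (hsCpot x).1 hx
  have hyr : mem y r := wsSub_of_foundAt_of_bland hTapNB hxr hBx y hy
  exact (hsCpot y).2 (hh.foundIn_of_mem_of_mem hrh hyr)

theorem wsWevel.bland_s9 {s : M} (hs : wsWevel Bland mem Tap s) : Bland s :=
  let ⟨_, _, hBs, _⟩ := hs
  hBs

theorem wsHeredBland_of_sub
    (hSep : ∀ (φ : M → Prop) a, Bland a → ∃ b, Bland b ∧ ∀ x, mem x b ↔ (mem x a ∧ φ x))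
    {a s : M} (hBs : Bland s) (hsTrans : ∀ x y, mem x s → Bland x → mem y x → mem y s)
    (hBa : Bland a) (has : wsSub mem a s) (hmem : ∀ x, mem x a → wsHeredBland Bland mem x) :
    wsHeredBland Bland mem a := by
  obtain ⟨c, -, hc⟩ := hSep (wsHeredBland Bland mem) s hBs
  refine ⟨hBa, c, fun x hx => (hc x).2 ⟨has x hx, hmem x hx⟩, fun x hxc => ?_⟩
  obtain ⟨hxs, hx⟩ := (hc x).1 hxc
  exact ⟨fun y hy => (hc y).2 ⟨hsTrans x y hxs hx.1 hy, hx.of_mem hy⟩, hx.1⟩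

end

theorem heredBland_iff_general {M : Type*} (Bland Wand : M → Prop) (mem : M → M → Prop)
    (Tap : M → M → M → Prop)
    (hTapNB : ∀ w a c, Tap w a c → Wand w ∧ ¬ Bland c)
    (hSep : ∀ (φ : M → Prop) a, Bland a → ∃ b, Bland b ∧ ∀ x, mem x b ↔ (mem x a ∧ φ x))
    (hStrat : ∀ a, ∃ s, wsWevel Bland mem Tap s ∧ wsFoundAt Bland mem Tap a s) :
    ∀ a, wsHeredBland Bland mem a ↔
      (Bland a ∧ ∀ x, mem x a → wsHeredBland Bland mem x) := by
  have hTapNotBland : ∀ w a c, Tap w a c → ¬ Bland c := fun w a c h => (hTapNB w a c h).2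
  intro a
  refine ⟨fun ha => ⟨ha.1, fun x hx => ha.of_mem hx⟩, fun ⟨hBa, hmem⟩ => ?_⟩
  obtain ⟨s, hs, has⟩ := hStrat a
  exact wsHeredBland_of_sub hSep hs.bland_s9
    (fun _ _ hx hBx hy => hs.mem_of_mem_of_bland hTapNotBland hx hBx hy)
    hBa (wsSub_of_foundAt_of_bland hTapNotBland has hBa) hmem

/-- a is hereditarily bland iff a is bland and every member of a is hereditarily bland. -/
theorem heredBland_iff {M : Type*} (Bland Wand : M → Prop) (mem : M → M → Prop)
    (Tap : M → M → M → Prop)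
    (hInNB : ∀ x a, mem x a → Bland a)
    (hTapNB : ∀ w a c, Tap w a c → Wand w ∧ ¬ Bland c)
    (hExt : ∀ a b, Bland a → Bland b → (∀ x, mem x a ↔ mem x b) → a = b)
    (hSep : ∀ (φ : M → Prop) a, Bland a → ∃ b, Bland b ∧ ∀ x, mem x b ↔ (mem x a ∧ φ x))
    (hStrat : ∀ a, ∃ s, wsWevel Bland mem Tap s ∧ wsFoundAt Bland mem Tap a s) :
    ∀ a, wsHeredBland Bland mem a ↔
      (Bland a ∧ ∀ x, mem x a → wsHeredBland Bland mem x) :=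
  heredBland_iff_general Bland Wand mem Tap hTapNB hSep hStrat
end

section
/- If pot_U(a) := {x : x ∈U-pot a} exists, then pot_U(a) is potent_U, U ⊆ pot_U(a), and pot_U(a) ∉ U. Here x ∈U-pot a means: (Bland(x) and ∃c (x ⊆ c ∈ a)) or x ∈ U. -/
/-- `x` is a subset of `r` (with respect to the membership relation `mem`). -/
def lvSub {M : Type*} (mem : M → M → Prop) (x r : M) : Prop :=
  ∀ y, mem y x → mem y r

/-- `x ∈U-pot a`: either x is bland and x ⊆ c ∈ a for some c, or x ∈ U. -/
def lvMemUPot {M : Type*} (Bland : M → Prop) (mem : M → M → Prop) (U x a : M) : Prop :=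
  (Bland x ∧ ∃ c, lvSub mem x c ∧ mem c a) ∨ mem x U

/-- `p` is pot_U(a): a bland set whose members are exactly {x : x ∈U-pot a}. -/
def lvIsPotU {M : Type*} (Bland : M → Prop) (mem : M → M → Prop) (U a p : M) : Prop :=
  Bland p ∧ ∀ x, mem x p ↔ lvMemUPot Bland mem U x a

/-- `a` is potent_U: every bland x with x ⊆ c ∈ a for some c ∉ U is a member of a. -/
def lvPotentU {M : Type*} (Bland : M → Prop) (mem : M → M → Prop) (U a : M) : Prop :=
  ∀ x, Bland x → (∃ c, ¬ mem c U ∧ lvSub mem x c ∧ mem c a) → mem x a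

/-- `a` is transitive_U: every member of a outside U is a subset of a. -/
def lvTransitiveU {M : Type*} (mem : M → M → Prop) (U a : M) : Prop :=
  ∀ x, mem x a → ¬ mem x U → lvSub mem x a

/-- `i` is the (bland) intersection of `a` and `h`. -/
def lvIsInter {M : Type*} (Bland : M → Prop) (mem : M → M → Prop) (a h i : M) : Prop :=
  Bland i ∧ ∀ x, mem x i ↔ (mem x a ∧ mem x h)

/-- `h` is a history_U: bland, and every x ∈ h equals pot_U(x ∩ h). -/
def lvHistoryU {M : Type*} (Bland : M → Prop) (mem : M → M → Prop) (U h : M) : Prop :=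
  Bland h ∧ ∀ x, mem x h → ∃ i, lvIsInter Bland mem x h i ∧ lvIsPotU Bland mem U i x

/-- `s` is a level_U: s = pot_U(h) for some history_U h. -/
def lvLevelU {M : Type*} (Bland : M → Prop) (mem : M → M → Prop) (U s : M) : Prop :=
  ∃ h, lvHistoryU Bland mem U h ∧ lvIsPotU Bland mem U h s

theorem lvSub_trans {M : Type*} {mem : M → M → Prop} {x y z : M}
    (hxy : lvSub mem x y) (hyz : lvSub mem y z) : lvSub mem x z :=
  fun w hw => hyz w (hxy w hw)

namespace lvIsPotU

variable {M : Type*} {Bland : M → Prop} {mem : M → M → Prop} {U a p : M}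

theorem mem_of_mem_U (hp : lvIsPotU Bland mem U a p) {x : M} (hx : mem x U) : mem x p :=
  (hp.2 x).2 (Or.inr hx)

theorem potentU (hp : lvIsPotU Bland mem U a p) : lvPotentU Bland mem U p := by
  rintro x hx ⟨c, hcU, hxc, hcp⟩
  rcases (hp.2 c).1 hcp with ⟨-, d, hcd, hda⟩ | hcU'
  · exact (hp.2 x).2 (Or.inl ⟨hx, d, lvSub_trans hxc hcd, hda⟩)
  · exact absurd hcU' hcU

theorem not_mem_U (hU : ∀ x, mem x U → ¬ mem x x) (hp : lvIsPotU Bland mem U a p) :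
    ¬ mem p U :=
  fun hpU => hU p hpU (hp.mem_of_mem_U hpU)

end lvIsPotU

/-- If pot_U(a) exists then it is potent_U, includes U, and is not a member of U. -/
theorem potU_potent {M : Type*} (Bland : M → Prop) (mem : M → M → Prop) (U : M)
    (hU : ∀ x, mem x U → ¬ mem x x)
    (a p : M) (hp : lvIsPotU Bland mem U a p) :
    lvPotentU Bland mem U p ∧ (∀ x, mem x U → mem x p) ∧ ¬ mem p U :=
  ⟨hp.potentU, fun _ => hp.mem_of_mem_U, hp.not_mem_U hU⟩
end

section
/- The map Θ, defined by ∈-recursion via Θa = σ({Θx : x ∈ a}) where σ(s) := {⟨∅, s⟩}, is injective, and Θa ≠ ∅ for every a. (Here ⟨x,y⟩ denotes the Kuratowski pair.) -/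
/-- `σ s = {⟨∅, s⟩}` with the Kuratowski pair. -/
noncomputable def thetaSigma (s : ZFSet) : ZFSet := {ZFSet.pair ∅ s}

/-!
`Θ a = σ {Θ x : x ∈ a}` and `σ` is injective, so `Θ a = Θ b` forces
`{Θ x : x ∈ a} = {Θ x : x ∈ b}`. By ∈-induction on `a`, `Θ` is injective on the members of
`a`, and then equal images give `a = b`. Nonemptiness holds because `σ s` is a singleton.
-/

theorem thetaSigma_injective : Function.Injective thetaSigma := fun _ _ h =>
  (ZFSet.pair_injective (ZFSet.singleton_injective h)).2

theorem thetaSigma_ne_empty (s : ZFSet) : thetaSigma s ≠ ∅ := fun h =>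
  ZFSet.not_nonempty_empty (h ▸ ZFSet.singleton_nonempty _)

section ImageDetermined

variable {F img : ZFSet → ZFSet}

theorem eq_of_image_eq_of_injOn_mem (himg : ∀ a y, y ∈ img a ↔ ∃ x ∈ a, y = F x)
    {a b : ZFSet} (hinj : ∀ x ∈ a, ∀ y, F x = F y → x = y)
    (hab : img a = img b) : a = b := by
  ext z
  constructor
  · intro hz
    obtain ⟨w, hw, hFzw⟩ := (himg b (F z)).1 (hab ▸ (himg a (F z)).2 ⟨z, hz, rfl⟩)
    rwa [hinj z hz w hFzw]
  · intro hz
    obtain ⟨w, hw, hFzw⟩ := (himg a (F z)).1 (hab ▸ (himg b (F z)).2 ⟨z, hz, rfl⟩)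
    rwa [← hinj w hw z hFzw.symm]

theorem injective_of_apply_eq_imp_image_eq (himg : ∀ a y, y ∈ img a ↔ ∃ x ∈ a, y = F x)
    (h : ∀ a b, F a = F b → img a = img b) :
    Function.Injective F := by
  intro a
  induction a using ZFSet.inductionOn with
  | h a ih => exact fun b hab => eq_of_image_eq_of_injOn_mem himg ih (h a b hab)

end ImageDetermined

/-- `img a` stands for `{Θ x : x ∈ a}`, so `hΘ` is the recursion equation characterizing `Θ`. -/
theorem theta_injective (Θ : ZFSet → ZFSet) (img : ZFSet → ZFSet)
    (himg : ∀ a y, y ∈ img a ↔ ∃ x ∈ a, y = Θ x)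
    (hΘ : ∀ a, Θ a = thetaSigma (img a)) :
    Function.Injective Θ ∧ ∀ a, Θ a ≠ ∅ := by
  have himg_eq : ∀ a b, Θ a = Θ b → img a = img b := fun a b hab =>
    thetaSigma_injective (by rwa [hΘ a, hΘ b] at hab)
  exact ⟨injective_of_apply_eq_imp_image_eq himg himg_eq,
    fun a => hΘ a ▸ thetaSigma_ne_empty (img a)⟩
end

section
/- In the theory CUS: if tap₀(tap₀(a)) exists, then a = tap₀(tap₀(a)). -/
section Involution

variable {M : Type*} {Bland : M → Prop} {T : M → M → Prop} {a b c : M}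

theorem not_bland_of_rel_of_rel (hMake : ∀ a, (∃ c, T a c) → ∀ b, Bland b → ¬ T b a)
    (hab : T a b) (hbc : T b c) : ¬ Bland a :=
  fun ha => hMake b ⟨c, hbc⟩ a ha hab

theorem eq_of_rel_of_rel_of_comp (hFun : ∀ a c d, T a c → T a d → c = d)
    (hComp : ∀ a, ¬ Bland a → (∀ b, Bland b → ¬ T b a) → ∃ b, T a b ∧ T b a)
    (ha : ¬ Bland a) (hpre : ∀ b, Bland b → ¬ T b a) (hab : T a b) (hbc : T b c) :
    c = a := by
  obtain ⟨b', hab', hb'a⟩ := hComp a ha hpre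
  obtain rfl : b' = b := hFun a b' b hab' hab
  exact hFun b' c a hbc hb'a

end Involution

theorem tap0_tap0_eq_general {M : Type*} (Bland : M → Prop) (Tap : M → M → M → Prop)
    (zero : M)
    (hTapFun : ∀ w a c d, Tap w a c → Tap w a d → c = d)
    (hMake : ∀ a, (∃ c, Tap zero a c) ↔ ∀ b, Bland b → ¬ Tap zero b a)
    (hComp2 : ∀ a, ¬ Bland a → (∀ b, Bland b → ¬ Tap zero b a) →
      ∃ b, Tap zero a b ∧ Tap zero b a) :
    ∀ a b c, Tap zero a b → Tap zero b c → c = a := by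
  intro a b c hab hbc
  have hMake' : ∀ a, (∃ c, Tap zero a c) → ∀ b, Bland b → ¬ Tap zero b a :=
    fun a => (hMake a).mp
  exact eq_of_rel_of_rel_of_comp (hTapFun zero) hComp2
    (not_bland_of_rel_of_rel hMake' hab hbc) (hMake' a ⟨b, hab⟩) hab hbc

/-- In CUS: if tap₀(tap₀(a)) exists, then a = tap₀(tap₀(a)).  Here `zero` is the
complement wand, and `Tap zero a b` says that tapping a with it yields b; so the claim
is: if Tap zero a b and Tap zero b c then c = a. -/
theorem tap0_tap0_eq {M : Type*} (Bland Wand : M → Prop) (Tap : M → M → M → Prop)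
    (zero : M)
    (hTapNB : ∀ w a c, Tap w a c → Wand w ∧ ¬ Bland c)
    (hTapFun : ∀ w a c d, Tap w a c → Tap w a d → c = d)
    (hMake : ∀ a, (∃ c, Tap zero a c) ↔ ∀ b, Bland b → ¬ Tap zero b a)
    (hComp2 : ∀ a, ¬ Bland a → (∀ b, Bland b → ¬ Tap zero b a) →
      ∃ b, Tap zero a b ∧ Tap zero b a) :
    ∀ a b c, Tap zero a b → Tap zero b c → c = a :=
  tap0_tap0_eq_general Bland Tap zero hTapFun hMake hComp2
end

section
/- Church's 1-equivalence coincides with equinumerosity of nonempty sets: a ≈₁ b if and only if a and b are nonempty, all their members are sets [bland], and there is a bijection between a and b. Moreover, for each n, ≈ₙ is symmetric and transitive on its field, and reflexive on those a with a ≈ₙ a. -/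
/-! The bijections of a ≈ₙ b can be inverted level by level, and those of a ≈ₙ b and b ≈ₙ c
composed level by level; both operations preserve the condition that each f_i acts on
x ∈ ⋃ⁱa as the image of f_{i+1}. Reflexivity on the field then follows from symmetry and
transitivity. -/

/-- Iterated union: ⋃⁰a = a, ⋃ⁿ⁺¹a = ⋃(⋃ⁿa). -/
noncomputable def iterUnion : ℕ → ZFSet → ZFSet
  | 0, a => a
  | n + 1, a => ZFSet.sUnion (iterUnion n a)

/-- Church's n-equivalence a ≈ₙ b: the iterated unions ⋃ⁱa, ⋃ⁱb (i < n) are nonempty,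
there is a bijection f_{n-1} : ⋃ⁿ⁻¹a → ⋃ⁿ⁻¹b, and setting
f_i(x) = {f_{i+1}(y) : y ∈ x} defines a bijection f_i : ⋃ⁱa → ⋃ⁱb for each i < n-1. -/
def ChurchEquiv (n : ℕ) (a b : ZFSet) : Prop :=
  (∀ i < n, iterUnion i a ≠ ∅ ∧ iterUnion i b ≠ ∅) ∧
  ∃ F : ℕ → ZFSet → ZFSet,
    Set.BijOn (F (n - 1)) (iterUnion (n - 1) a).toSet (iterUnion (n - 1) b).toSet ∧
    ∀ i < n - 1,
      (∀ x ∈ iterUnion i a, ∀ z, z ∈ F i x ↔ ∃ y ∈ x, z = F (i + 1) y) ∧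
      Set.BijOn (F i) (iterUnion i a).toSet (iterUnion i b).toSet

open Set

lemma toSet_subset_iterUnion_succ {i : ℕ} {a x : ZFSet} (hx : x ∈ iterUnion i a) :
    x.toSet ⊆ (iterUnion (i + 1) a).toSet :=
  fun _ hz => ZFSet.mem_sUnion.2 ⟨x, hx, hz⟩

lemma ZFSet.mem_iff_of_leftInvOn {f g : ZFSet → ZFSet} {s : Set ZFSet} (hgf : LeftInvOn g f s)
    {u x : ZFSet} (hus : u.toSet ⊆ s) (hx : ∀ z, z ∈ x ↔ ∃ y ∈ u, z = f y) :
    ∀ z, z ∈ u ↔ ∃ y ∈ x, z = g y := by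
  intro z
  constructor
  · intro hz
    exact ⟨f z, (hx _).2 ⟨z, hz, rfl⟩, (hgf (hus hz)).symm⟩
  · rintro ⟨y, hy, rfl⟩
    obtain ⟨w, hw, rfl⟩ := (hx y).1 hy
    rwa [hgf (hus hw)]

namespace ChurchEquiv

variable {n : ℕ} {a b c : ZFSet}

lemma iff_bijOn_le : ChurchEquiv n a b ↔
    (∀ i < n, iterUnion i a ≠ ∅ ∧ iterUnion i b ≠ ∅) ∧
    ∃ F : ℕ → ZFSet → ZFSet,
      (∀ i ≤ n - 1, BijOn (F i) (iterUnion i a).toSet (iterUnion i b).toSet) ∧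
      ∀ i < n - 1, ∀ x ∈ iterUnion i a, ∀ z, z ∈ F i x ↔ ∃ y ∈ x, z = F (i + 1) y := by
  refine and_congr_right fun _ => exists_congr fun F => ?_
  constructor
  · rintro ⟨htop, hlow⟩
    refine ⟨fun i hi => ?_, fun i hi => (hlow i hi).1⟩
    rcases hi.lt_or_eq with hi | rfl
    exacts [(hlow i hi).2, htop]
  · rintro ⟨hbij, himage⟩
    exact ⟨hbij _ le_rfl, fun i hi => ⟨himage i hi, hbij i hi.le⟩⟩

lemma symm (h : ChurchEquiv n a b) : ChurchEquiv n b a := by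
  obtain ⟨hne, F, hbij, himage⟩ := iff_bijOn_le.1 h
  set G : ℕ → ZFSet → ZFSet := fun i => Function.invFunOn (F i) (iterUnion i a).toSet
  have hinv : ∀ i ≤ n - 1, InvOn (G i) (F i) (iterUnion i a).toSet (iterUnion i b).toSet :=
    fun i hi => (hbij i hi).invOn_invFunOn
  have hGbij : ∀ i ≤ n - 1, BijOn (G i) (iterUnion i b).toSet (iterUnion i a).toSet :=
    fun i hi => (hbij i hi).symm (hinv i hi).symm
  refine iff_bijOn_le.2 ⟨fun i hi => (hne i hi).symm, G, hGbij, fun i hi x hx => ?_⟩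
  have hGx : G i x ∈ iterUnion i a := (hGbij i hi.le).mapsTo hx
  have hx_image := himage i hi _ hGx
  rw [(hinv i hi.le).2 hx] at hx_image
  exact ZFSet.mem_iff_of_leftInvOn (hinv (i + 1) (by omega)).1
    (toSet_subset_iterUnion_succ hGx) hx_image

lemma trans (hab : ChurchEquiv n a b) (hbc : ChurchEquiv n b c) : ChurchEquiv n a c := by
  obtain ⟨hne, F, hF, hFimage⟩ := iff_bijOn_le.1 hab
  obtain ⟨hne', G, hG, hGimage⟩ := iff_bijOn_le.1 hbc
  refine iff_bijOn_le.2 ⟨fun i hi => ⟨(hne i hi).1, (hne' i hi).2⟩, fun i => G i ∘ F i,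
    fun i hi => (hG i hi).comp (hF i hi), fun i hi x hx z => ?_⟩
  change z ∈ G i (F i x) ↔ ∃ y ∈ x, z = G (i + 1) (F (i + 1) y)
  rw [hGimage i hi _ ((hF i hi.le).mapsTo hx)]
  simp [hFimage i hi x hx]

lemma refl_left (h : ChurchEquiv n a b) : ChurchEquiv n a a :=
  h.trans h.symm

lemma one_iff :
    ChurchEquiv 1 a b ↔ a ≠ ∅ ∧ b ≠ ∅ ∧ ∃ f : ZFSet → ZFSet, BijOn f a.toSet b.toSet := by
  simp only [ChurchEquiv, Nat.lt_one_iff, forall_eq, iterUnion, Nat.sub_self, Nat.not_lt_zero,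
    IsEmpty.forall_iff, implies_true, and_true, and_assoc]
  exact and_congr_right' <| and_congr_right'
    ⟨fun ⟨F, hF⟩ => ⟨F 0, hF⟩, fun ⟨f, hf⟩ => ⟨fun _ => f, hf⟩⟩

end ChurchEquiv

/-- Church's 1-equivalence is equinumerosity of nonempty sets; and for each n ≥ 1,
≈ₙ is symmetric, transitive, and reflexive on those a with a ≈ₙ-related to something. -/
theorem churchEquiv_facts :
    (∀ a b : ZFSet, ChurchEquiv 1 a b ↔
      (a ≠ ∅ ∧ b ≠ ∅ ∧ ∃ f : ZFSet → ZFSet, Set.BijOn f a.toSet b.toSet)) ∧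
    (∀ n : ℕ, 1 ≤ n → ∀ a b : ZFSet, ChurchEquiv n a b → ChurchEquiv n b a) ∧
    (∀ n : ℕ, 1 ≤ n → ∀ a b c : ZFSet,
      ChurchEquiv n a b → ChurchEquiv n b c → ChurchEquiv n a c) ∧
    (∀ n : ℕ, 1 ≤ n → ∀ a b : ZFSet, ChurchEquiv n a b → ChurchEquiv n a a) :=
  ⟨fun _ _ => ChurchEquiv.one_iff, fun _ _ _ _ => ChurchEquiv.symm,
    fun _ _ _ _ _ => ChurchEquiv.trans, fun _ _ _ _ => ChurchEquiv.refl_left⟩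
end
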